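/- arXiv:0907.4577 — 2 statements merged into one kernel-verified Lean document; each statement's English description precedes it below -/
import Mathlib

section
/- For every real a ≥ 0, the function t ↦ arccosh(1 + a(1 − cos t)) is concave on the interval [0, π]. -/
/-!
Since `1 - cos t = 2 sin² (t / 2)` and `arcosh (1 + 2 y²) = 2 arsinh y` for `y ≥ 0`, the function
equals `2 arsinh (√a sin (t / 2))` on `[0, π]`. There `√a sin (t / 2)` is concave and nonnegative,
and `arsinh` is concave and increasing on `[0, ∞)`, so the composite is concave.
-/

/-- The inverse hyperbolic cosine, defined (for `x ≥ 1`) by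
`arcosh x = log (x + sqrt (x² − 1))`. -/
noncomputable def arcosh (x : ℝ) : ℝ :=
  Real.log (x + Real.sqrt (x ^ 2 - 1))

open Real hiding arcosh
open Set

theorem ConcaveOn.comp_of_mapsTo {𝕜 E α β : Type*} [Semiring 𝕜] [PartialOrder 𝕜]
    [AddCommMonoid E] [SMul 𝕜 E] [AddCommMonoid α] [PartialOrder α] [SMul 𝕜 α]
    [AddCommMonoid β] [PartialOrder β] [SMul 𝕜 β] {s : Set E} {t : Set β} {f : E → β} {g : β → α}
    (hg : ConcaveOn 𝕜 t g) (hf : ConcaveOn 𝕜 s f) (hg' : MonotoneOn g t) (hst : MapsTo f s t) :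
    ConcaveOn 𝕜 s (g ∘ f) :=
  ⟨hf.1, fun _ hx _ hy _ _ ha hb hab =>
    (hg.2 (hst hx) (hst hy) ha hb hab).trans <|
      hg' (hg.1 (hst hx) (hst hy) ha hb hab) (hst <| hf.1 hx hy ha hb hab) (hf.2 hx hy ha hb hab)⟩

theorem Real.concaveOn_arsinh : ConcaveOn ℝ (Ici 0) arsinh := by
  refine AntitoneOn.concaveOn_of_deriv (convex_Ici 0) continuous_arsinh.continuousOn
    differentiable_arsinh.differentiableOn fun x hx y hy hxy => ?_
  rw [interior_Ici] at hx hy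
  rw [(hasDerivAt_arsinh x).deriv, (hasDerivAt_arsinh y).deriv]
  gcongr
  exact hx.le

theorem arcosh_one_add_two_mul_sq {y : ℝ} (hy : 0 ≤ y) :
    arcosh (1 + 2 * y ^ 2) = 2 * arsinh y := by
  have hsq : √(1 + y ^ 2) ^ 2 = 1 + y ^ 2 := sq_sqrt (by positivity)
  have hroot : √((1 + 2 * y ^ 2) ^ 2 - 1) = 2 * y * √(1 + y ^ 2) := by
    rw [← sqrt_sq (by positivity : 0 ≤ 2 * y * √(1 + y ^ 2)), mul_pow, hsq]
    ring_nf
  have hsquare : 1 + 2 * y ^ 2 + 2 * y * √(1 + y ^ 2) = (y + √(1 + y ^ 2)) ^ 2 := by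
    linear_combination -hsq
  rw [arcosh, arsinh, hroot, hsquare, log_pow]
  push_cast
  ring

theorem Real.concaveOn_sin_half : ConcaveOn ℝ (Icc 0 (2 * π)) fun t => sin (t / 2) := by
  refine ⟨convex_Icc _ _, fun x hx y hy a b ha hb hab => ?_⟩
  have hhalf : ∀ t ∈ Icc 0 (2 * π), t / 2 ∈ Icc 0 π := fun t ht =>
    ⟨by linarith [ht.1], by linarith [ht.2]⟩
  convert strictConcaveOn_sin_Icc.concaveOn.2 (hhalf x hx) (hhalf y hy) ha hb hab using 2
  simp only [smul_eq_mul]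
  ring

theorem one_add_mul_one_sub_cos_eq {a : ℝ} (ha : 0 ≤ a) (t : ℝ) :
    1 + a * (1 - cos t) = 1 + 2 * (√a * sin (t / 2)) ^ 2 := by
  rw [mul_pow, sq_sqrt ha, sin_sq_eq_half_sub, mul_div_cancel₀ t two_ne_zero]
  ring

/-- for `a ≥ 0`, the function `t ↦ arcosh(1 + a(1 − cos t))`
is concave on `[0, π]`. -/
theorem concaveOn_arcosh_one_add (a : ℝ) (ha : 0 ≤ a) :
    ConcaveOn ℝ (Set.Icc (0 : ℝ) Real.pi)
      (fun t => arcosh (1 + a * (1 - Real.cos t))) := by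
  have hnonneg : MapsTo (fun t => √a * sin (t / 2)) (Icc 0 π) (Ici 0) := fun t ht =>
    mul_nonneg (sqrt_nonneg a) (sin_nonneg_of_nonneg_of_le_pi (by linarith [ht.1])
      (by linarith [ht.2, pi_pos]))
  have hinner : ConcaveOn ℝ (Icc 0 π) fun t => √a * sin (t / 2) :=
    (concaveOn_sin_half.subset (Icc_subset_Icc_right (by linarith [pi_pos]))
      (convex_Icc 0 π)).smul (sqrt_nonneg a)
  have hcomp := (concaveOn_arsinh.comp_of_mapsTo hinner
    (arsinh_strictMono.monotone.monotoneOn _) hnonneg).smul zero_le_two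
  refine hcomp.congr fun t ht => ?_
  simp only [Function.comp_apply, smul_eq_mul]
  rw [one_add_mul_one_sub_cos_eq ha, arcosh_one_add_two_mul_sq (hnonneg ht)]
end

section
/- For all reals r, r' ≥ 0 and θ ∈ [0, π], one has 2·min{r, r'}·(θ/π) ≤ arccosh( cosh(r)·cosh(r') − sinh(r)·sinh(r')·cos(θ) ) ≤ |r − r'| + √(sinh(r)·sinh(r'))·θ. (These are the upper and lower bounds for the distance between two points (y,r) and (y',r') of the hyperbolic cone over a metric space, where θ is the angle between y and y'.) -/
/-!
Write `cosh r cosh r' − sinh r sinh r' cos θ = cosh (r − r') + sinh r sinh r' (1 − cos θ)`;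
both bounds then come from comparing this with the `cosh` of the claimed bound. For the upper
bound, `1 − cos θ ≤ θ²/2` and `cosh (a + b) ≥ cosh a + b²/2`. For the lower bound, with
`m = min r r'` and `t = θ/π`, `cosh (2mt) = 1 + 2 sinh² (tm)`, while convexity of `sinh` gives
`sinh (tm) ≤ t sinh m` and Jordan's inequality gives `1 − cos θ ≥ 2t²`.
-/

open Real hiding arcosh
open Set

theorem arcosh_eq_real_arcosh : arcosh = Real.arcosh := rfl

theorem le_arcosh_of_cosh_le {x c : ℝ} (hx : 0 ≤ x) (h : cosh x ≤ c) : x ≤ arcosh c := by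
  rw [arcosh_eq_real_arcosh, ← arcosh_cosh hx]
  exact (arcosh_le_arcosh (cosh_pos x) ((cosh_pos x).trans_le h)).2 h

theorem arcosh_le_of_le_cosh {x c : ℝ} (hx : 0 ≤ x) (hc : 0 < c) (h : c ≤ cosh x) :
    arcosh c ≤ x := by
  rw [arcosh_eq_real_arcosh, ← arcosh_cosh hx]
  exact (arcosh_le_arcosh hc (cosh_pos x)).2 h

theorem cosh_mul_cosh_sub_sinh_mul_sinh_mul_cos (r r' θ : ℝ) :
    cosh r * cosh r' - sinh r * sinh r' * cos θ =
      cosh (r - r') + sinh r * sinh r' * (1 - cos θ) := by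
  rw [cosh_sub]; ring

theorem convexOn_sinh : ConvexOn ℝ (Ici 0) sinh := by
  refine MonotoneOn.convexOn_of_deriv (convex_Ici 0) continuous_sinh.continuousOn
    differentiable_sinh.differentiableOn ?_
  rw [Real.deriv_sinh, interior_Ici]
  exact cosh_strictMonoOn.monotoneOn.mono Ioi_subset_Ici_self

theorem sinh_mul_le_mul_sinh {t x : ℝ} (ht₀ : 0 ≤ t) (ht₁ : t ≤ 1) (hx : 0 ≤ x) :
    sinh (t * x) ≤ t * sinh x := by
  simpa using convexOn_sinh.2 (mem_Ici.2 le_rfl) (mem_Ici.2 hx) (sub_nonneg.2 ht₁) ht₀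
    (sub_add_cancel 1 t)

theorem one_add_sq_div_two_le_cosh (x : ℝ) : 1 + x ^ 2 / 2 ≤ cosh x := by
  have hsinh : (x / 2) ^ 2 ≤ sinh (x / 2) ^ 2 := by
    rw [sq_le_sq, abs_sinh]
    exact self_le_sinh_iff.2 (abs_nonneg _)
  calc 1 + x ^ 2 / 2 = 1 + 2 * (x / 2) ^ 2 := by ring
    _ ≤ 1 + 2 * sinh (x / 2) ^ 2 := by gcongr
    _ = cosh (2 * (x / 2)) := by rw [cosh_two_mul, cosh_sq]; ring
    _ = cosh x := by rw [mul_div_cancel₀ x two_ne_zero]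

theorem cosh_add_sq_div_two_le_cosh_add {a b : ℝ} (ha : 0 ≤ a) (hb : 0 ≤ b) :
    cosh a + b ^ 2 / 2 ≤ cosh (a + b) := by
  have hsinh : 0 ≤ sinh a * sinh b := mul_nonneg (sinh_nonneg_iff.2 ha) (sinh_nonneg_iff.2 hb)
  have hcosh : 1 + b ^ 2 / 2 ≤ cosh b := one_add_sq_div_two_le_cosh b
  calc cosh a + b ^ 2 / 2 ≤ cosh a * (1 + b ^ 2 / 2) := by
        nlinarith [one_le_cosh a, sq_nonneg b]
    _ ≤ cosh a * cosh b := by gcongr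
    _ ≤ cosh (a + b) := by rw [cosh_add]; linarith

theorem cosh_two_mul_min_mul_le {r r' θ : ℝ} (hr : 0 ≤ r) (hr' : 0 ≤ r') (hθ₀ : 0 ≤ θ)
    (hθπ : θ ≤ π) :
    cosh (2 * min r r' * (θ / π)) ≤ cosh (r - r') + sinh r * sinh r' * (1 - cos θ) := by
  set m := min r r'
  set t := θ / π
  have hm : 0 ≤ m := le_min hr hr'
  have ht₀ : 0 ≤ t := div_nonneg hθ₀ pi_pos.le
  have ht₁ : t ≤ 1 := (div_le_one pi_pos).2 hθπ
  have hsinh_m : 0 ≤ sinh m := sinh_nonneg_iff.2 hm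
  have hsinh_sq : sinh m ^ 2 ≤ sinh r * sinh r' := by
    rw [sq]
    exact mul_le_mul (sinh_le_sinh.2 (min_le_left r r')) (sinh_le_sinh.2 (min_le_right r r'))
      hsinh_m (sinh_nonneg_iff.2 hr)
  have hjordan : 2 * t ^ 2 ≤ 1 - cos θ := by
    have h := cos_le_one_sub_mul_cos_sq (abs_le.2 ⟨by linarith [pi_pos], hθπ⟩)
    have ht : 2 * t ^ 2 = 2 / π ^ 2 * θ ^ 2 := by ring
    linarith
  calc cosh (2 * m * t) = 1 + 2 * sinh (t * m) ^ 2 := by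
        rw [show 2 * m * t = 2 * (t * m) by ring, cosh_two_mul, cosh_sq]; ring
    _ ≤ 1 + 2 * (t * sinh m) ^ 2 := by gcongr; exact sinh_mul_le_mul_sinh ht₀ ht₁ hm
    _ = 1 + sinh m ^ 2 * (2 * t ^ 2) := by ring
    _ ≤ 1 + sinh r * sinh r' * (1 - cos θ) := by gcongr
    _ ≤ cosh (r - r') + sinh r * sinh r' * (1 - cos θ) := by gcongr; exact one_le_cosh _

theorem cosh_sub_add_le_cosh_abs_sub_add {r r' θ : ℝ} (hr : 0 ≤ r) (hr' : 0 ≤ r') (hθ : 0 ≤ θ) :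
    cosh (r - r') + sinh r * sinh r' * (1 - cos θ) ≤
      cosh (|r - r'| + √(sinh r * sinh r') * θ) := by
  have hp : 0 ≤ sinh r * sinh r' := mul_nonneg (sinh_nonneg_iff.2 hr) (sinh_nonneg_iff.2 hr')
  have hcos : 1 - cos θ ≤ θ ^ 2 / 2 := by linarith [one_sub_sq_div_two_le_cos (x := θ)]
  calc cosh (r - r') + sinh r * sinh r' * (1 - cos θ)
      ≤ cosh |r - r'| + (√(sinh r * sinh r') * θ) ^ 2 / 2 := by
        rw [cosh_abs, mul_pow, sq_sqrt hp]
        nlinarith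
    _ ≤ cosh (|r - r'| + √(sinh r * sinh r') * θ) :=
        cosh_add_sq_div_two_le_cosh_add (abs_nonneg _) (by positivity)

/-- two-sided bound for the distance
`arcosh(cosh r cosh r' − sinh r sinh r' cos θ)` in a hyperbolic cone. -/
theorem cone_distance_bounds (r r' θ : ℝ) (hr : 0 ≤ r) (hr' : 0 ≤ r')
    (hθ : θ ∈ Set.Icc (0 : ℝ) Real.pi) :
    2 * min r r' * (θ / Real.pi) ≤
        arcosh (Real.cosh r * Real.cosh r' -
          Real.sinh r * Real.sinh r' * Real.cos θ) ∧
      arcosh (Real.cosh r * Real.cosh r' -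
          Real.sinh r * Real.sinh r' * Real.cos θ) ≤
        |r - r'| + Real.sqrt (Real.sinh r * Real.sinh r') * θ := by
  obtain ⟨hθ₀, hθπ⟩ := hθ
  rw [cosh_mul_cosh_sub_sinh_mul_sinh_mul_cos]
  have hlower := cosh_two_mul_min_mul_le hr hr' hθ₀ hθπ
  exact ⟨le_arcosh_of_cosh_le (by positivity) hlower,
    arcosh_le_of_le_cosh (by positivity) ((cosh_pos _).trans_le hlower)
      (cosh_sub_add_le_cosh_abs_sub_add hr hr' hθ₀)⟩
end
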